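/- arXiv:2006.03015 — 5 statements merged into one kernel-verified Lean document; each statement's English description precedes it below -/
import Mathlib

section
/- Let n, m, m̃, ñ be positive integers, let Φ ∈ ℝ^{n×m}, S ∈ ℝ^{m×m}, y ∈ ℝ^n, μ ∈ ℝ^m and σ² > 0, and define L_μ(μ) = (1/σ²)(−2 yᵀΦμ + ‖Φμ‖²) + μᵀSμ. Let ĩ, j̃ ∈ {1,…,m}^{m̃} and ℓ̃ ∈ {1,…,n}^{ñ} be random index vectors whose entries are i.i.d. uniform and which are mutually independent. Then the estimator −(2nm/(σ²ñm̃)) y_{ℓ̃}ᵀ Φ_{ℓ̃,ĩ} μ_{ĩ} + (nm²/(σ²ñm̃²)) μ_{j̃}ᵀ Φ_{ℓ̃,j̃}ᵀ Φ_{ℓ̃,ĩ} μ_{ĩ} + (m²/m̃²) μ_{j̃}ᵀ S_{j̃,ĩ} μ_{ĩ} is unbiased: its expectation over ĩ, j̃, ℓ̃ equals L_μ(μ). Here A_{ũ,ṽ} denotes the matrix with (a,b)-entry A_{ũ_a, ṽ_b} and v_{ũ} the vector with a-th entry v_{ũ_a}. -/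
open Matrix BigOperators Finset

lemma key {N k : ℕ} (a : Fin k) (F : Fin N → ℝ) :
    ∑ f : Fin k → Fin N, F (f a) = (N : ℝ) ^ (k - 1) * ∑ i, F i := by
  rw [← (Equiv.funSplitAt a (Fin N)).symm.sum_comp (fun f => F (f a))]
  simp [Fintype.sum_prod_type, Finset.sum_mul, mul_comm]

lemma keyS {k N : ℕ} (G : Fin N → ℝ) :
    ∑ f : Fin k → Fin N, ∑ a : Fin k, G (f a)
      = (k : ℝ) * (N : ℝ) ^ (k - 1) * ∑ x, G x := by
  rw [Finset.sum_comm]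
  rw [Finset.sum_congr rfl fun a _ => key a G]
  simp [Finset.sum_const]; ring

lemma key2 {k N j M : ℕ} (F : Fin M → Fin N → ℝ) :
    ∑ f : Fin k → Fin N, ∑ g : Fin j → Fin M, ∑ a : Fin j, ∑ b : Fin k, F (g a) (f b)
      = (j : ℝ) * (M : ℝ) ^ (j - 1) * ((k : ℝ) * (N : ℝ) ^ (k - 1)) * ∑ x, ∑ z, F x z := by
  calc ∑ f : Fin k → Fin N, ∑ g : Fin j → Fin M, ∑ a : Fin j, ∑ b : Fin k, F (g a) (f b)
      = ∑ f : Fin k → Fin N, ((j:ℝ) * (M:ℝ)^(j-1) * ∑ x, ∑ b, F x (f b)) :=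
        Finset.sum_congr rfl fun f _ => keyS (fun z => ∑ b, F z (f b))
    _ = (j:ℝ) * (M:ℝ)^(j-1) * ∑ x, ∑ f : Fin k → Fin N, ∑ b, F x (f b) := by
        rw [← Finset.mul_sum, Finset.sum_comm]
    _ = (j:ℝ) * (M:ℝ)^(j-1) * ∑ x, ((k:ℝ) * (N:ℝ)^(k-1) * ∑ z, F x z) := by
        rw [Finset.sum_congr rfl fun x _ => keyS (fun z => F x z)]
    _ = _ := by rw [← Finset.mul_sum]; ring

lemma key3 {k N j M p P : ℕ} (F : Fin M → Fin N → Fin P → ℝ) :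
    ∑ f : Fin k → Fin N, ∑ g : Fin j → Fin M, ∑ h : Fin p → Fin P,
      ∑ a : Fin j, ∑ b : Fin k, ∑ c : Fin p, F (g a) (f b) (h c)
      = (p : ℝ) * (P : ℝ) ^ (p - 1) *
          ((j : ℝ) * (M : ℝ) ^ (j - 1) * ((k : ℝ) * (N : ℝ) ^ (k - 1))) *
          ∑ x, ∑ z, ∑ w, F x z w := by
  have hfg : ∀ (f : Fin k → Fin N) (g : Fin j → Fin M),
      ∑ h : Fin p → Fin P, ∑ a : Fin j, ∑ b : Fin k, ∑ c : Fin p, F (g a) (f b) (h c)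
        = (p:ℝ) * (P:ℝ)^(p-1) * ∑ a, ∑ b, ∑ w, F (g a) (f b) w := by
    intro f g
    rw [Finset.sum_comm]
    rw [Finset.sum_congr rfl fun a _ => Finset.sum_comm]
    rw [Finset.sum_congr rfl fun a _ => Finset.sum_congr rfl fun b _ =>
      keyS (fun w => F (g a) (f b) w)]
    simp only [← Finset.mul_sum]
  simp only [hfg, ← Finset.mul_sum]
  rw [key2 (fun x z => ∑ w, F x z w)]
  ring

/-- Theorem 1 of the paper: the quadruply stochastic estimator of the
variational-mean objective `L_μ(μ) = (1/σ²)(−2 yᵀΦμ + ‖Φμ‖²) + μᵀSμ` is unbiased.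
Here `m'` plays the role of `m̃` and `n'` of `ñ`; the random index vectors
`ii, jj : Fin m' → Fin m` and `ll : Fin n' → Fin n` have i.i.d. uniform entries and are
mutually independent, which is formalized by taking the expectation to be the uniform
average over all such index functions. -/
theorem quadruply_stochastic_mu_estimator_unbiased
    (n m m' n' : ℕ) (hn : 0 < n) (hm : 0 < m) (hm' : 0 < m') (hn' : 0 < n')
    (Φ : Matrix (Fin n) (Fin m) ℝ) (S : Matrix (Fin m) (Fin m) ℝ)
    (y : Fin n → ℝ) (μ : Fin m → ℝ) (σ2 : ℝ) (hσ : 0 < σ2) :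
    (∑ ii : Fin m' → Fin m, ∑ jj : Fin m' → Fin m, ∑ ll : Fin n' → Fin n,
        (-(2 * (n : ℝ) * m / (σ2 * n' * m')) *
            ((y ∘ ll) ⬝ᵥ (Φ.submatrix ll ii) *ᵥ (μ ∘ ii))
          + ((n : ℝ) * m ^ 2 / (σ2 * n' * m' ^ 2)) *
            ((μ ∘ jj) ⬝ᵥ ((Φ.submatrix ll jj)ᵀ * Φ.submatrix ll ii) *ᵥ (μ ∘ ii))
          + ((m : ℝ) ^ 2 / (m' : ℝ) ^ 2) * ((μ ∘ jj) ⬝ᵥ (S.submatrix jj ii) *ᵥ (μ ∘ ii))))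
      / ((Fintype.card (Fin m' → Fin m) : ℝ) * (Fintype.card (Fin m' → Fin m)) *
          (Fintype.card (Fin n' → Fin n)))
    = (1 / σ2) * (-2 * (y ⬝ᵥ Φ *ᵥ μ) + ((Φ *ᵥ μ) ⬝ᵥ (Φ *ᵥ μ))) + μ ⬝ᵥ S *ᵥ μ := by
  have eA : ∀ (ii : Fin m' → Fin m) (ll : Fin n' → Fin n),
      (y ∘ ll) ⬝ᵥ (Φ.submatrix ll ii) *ᵥ (μ ∘ ii)
        = ∑ a : Fin n', ∑ b : Fin m', y (ll a) * (Φ (ll a) (ii b) * μ (ii b)) := by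
    intro ii ll
    simp only [dotProduct, mulVec, submatrix_apply, Function.comp_apply, Finset.mul_sum]
  have eB : ∀ (ii jj : Fin m' → Fin m) (ll : Fin n' → Fin n),
      (μ ∘ jj) ⬝ᵥ ((Φ.submatrix ll jj)ᵀ * Φ.submatrix ll ii) *ᵥ (μ ∘ ii)
        = ∑ a : Fin m', ∑ b : Fin m', ∑ c : Fin n',
            μ (jj a) * (Φ (ll c) (jj a) * Φ (ll c) (ii b) * μ (ii b)) := by
    intro ii jj ll
    simp only [dotProduct, mulVec, mul_apply, transpose_apply, submatrix_apply,
      Function.comp_apply, Finset.mul_sum, Finset.sum_mul]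
  have eC : ∀ (ii jj : Fin m' → Fin m),
      (μ ∘ jj) ⬝ᵥ (S.submatrix jj ii) *ᵥ (μ ∘ ii)
        = ∑ a : Fin m', ∑ b : Fin m', μ (jj a) * (S (jj a) (ii b) * μ (ii b)) := by
    intro ii jj
    simp only [dotProduct, mulVec, submatrix_apply, Function.comp_apply, Finset.mul_sum]
  have hA : ∑ ii : Fin m' → Fin m, ∑ jj : Fin m' → Fin m, ∑ ll : Fin n' → Fin n,
      ((y ∘ ll) ⬝ᵥ (Φ.submatrix ll ii) *ᵥ (μ ∘ ii))
      = (m:ℝ)^m' * ((n':ℝ) * (n:ℝ)^(n'-1) * ((m':ℝ) * (m:ℝ)^(m'-1)) * (y ⬝ᵥ Φ *ᵥ μ)) := by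
    simp only [Finset.sum_const, Finset.card_univ, nsmul_eq_mul, ← Finset.mul_sum]
    simp only [eA]
    rw [key2 (fun l i => y l * (Φ l i * μ i))]
    have : ∑ x, ∑ z, y x * (Φ x z * μ z) = y ⬝ᵥ Φ *ᵥ μ := by
      simp [dotProduct, mulVec, Finset.mul_sum]
    rw [this]
    simp only [Fintype.card_fun, Fintype.card_fin]
    push_cast
    ring
  have hB : ∑ ii : Fin m' → Fin m, ∑ jj : Fin m' → Fin m, ∑ ll : Fin n' → Fin n,
      ((μ ∘ jj) ⬝ᵥ ((Φ.submatrix ll jj)ᵀ * Φ.submatrix ll ii) *ᵥ (μ ∘ ii))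
      = (n':ℝ) * (n:ℝ)^(n'-1) * ((m':ℝ) * (m:ℝ)^(m'-1))^2 * ((Φ *ᵥ μ) ⬝ᵥ (Φ *ᵥ μ)) := by
    simp only [eB]
    rw [key3 (fun x z w => μ x * (Φ w x * Φ w z * μ z))]
    have : ∑ x, ∑ z, ∑ w, μ x * (Φ w x * Φ w z * μ z) = (Φ *ᵥ μ) ⬝ᵥ (Φ *ᵥ μ) := by
      rw [Finset.sum_comm]
      rw [Finset.sum_congr rfl fun z _ => Finset.sum_comm]
      simp only [dotProduct, mulVec, Finset.mul_sum, Finset.sum_mul]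
      rw [Finset.sum_comm]
      exact Finset.sum_congr rfl fun w _ => Finset.sum_congr rfl fun z _ =>
        Finset.sum_congr rfl fun x _ => by ring
    rw [this]
    ring
  have hC : ∑ ii : Fin m' → Fin m, ∑ jj : Fin m' → Fin m, ∑ ll : Fin n' → Fin n,
      ((μ ∘ jj) ⬝ᵥ (S.submatrix jj ii) *ᵥ (μ ∘ ii))
      = (n:ℝ)^n' * ((m':ℝ) * (m:ℝ)^(m'-1))^2 * (μ ⬝ᵥ S *ᵥ μ) := by
    simp only [Finset.sum_const, Finset.card_univ, nsmul_eq_mul]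
    simp only [← Finset.mul_sum]
    simp only [eC]
    rw [key2 (fun x z => μ x * (S x z * μ z))]
    have : ∑ x, ∑ z, μ x * (S x z * μ z) = μ ⬝ᵥ S *ᵥ μ := by
      simp [dotProduct, mulVec, Finset.mul_sum]
    rw [this]
    simp only [Fintype.card_fun, Fintype.card_fin]
    push_cast
    ring
  simp only [Finset.sum_add_distrib, ← Finset.mul_sum]
  rw [hA, hB, hC]
  simp only [Fintype.card_fun, Fintype.card_fin]
  have en : (n:ℝ)^n' = (n:ℝ) * (n:ℝ)^(n'-1) := by
    conv_lhs => rw [← Nat.succ_pred_eq_of_pos hn']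
    rw [pow_succ', Nat.pred_eq_sub_one]
  have em : (m:ℝ)^m' = (m:ℝ) * (m:ℝ)^(m'-1) := by
    conv_lhs => rw [← Nat.succ_pred_eq_of_pos hm']
    rw [pow_succ', Nat.pred_eq_sub_one]
  have hn0 : (n:ℝ) ≠ 0 := Nat.cast_ne_zero.2 hn.ne'
  have hm0 : (m:ℝ) ≠ 0 := Nat.cast_ne_zero.2 hm.ne'
  have hn'0 : (n':ℝ) ≠ 0 := Nat.cast_ne_zero.2 hn'.ne'
  have hm'0 : (m':ℝ) ≠ 0 := Nat.cast_ne_zero.2 hm'.ne'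
  have hσ0 : σ2 ≠ 0 := hσ.ne'
  have hnp : (n:ℝ)^(n'-1) ≠ 0 := pow_ne_zero _ hn0
  have hmp : (m:ℝ)^(m'-1) ≠ 0 := pow_ne_zero _ hm0
  push_cast
  rw [en, em]
  field_simp
end

section
/- Let n, m, m̃, ñ be positive integers, Φ ∈ ℝ^{n×m}, S ∈ ℝ^{m×m}, σ² > 0, and let C ∈ ℝ^{m×m} be lower triangular with positive diagonal entries c_{rr}; set Σ = CCᵀ and define L_Σ(C) = (1/σ²)·Σ_{entries}((ΦC)²) + tr(SΣ) − log det Σ. Let ĩ, j̃, r̃ ∈ {1,…,m}^{m̃} and ℓ̃ ∈ {1,…,n}^{ñ} be random index vectors with i.i.d. uniform entries, mutually independent. Then the estimator (m/m̃) Σ_{r ∈ r̃} [ (nm²/(σ²ñm̃²)) c_{j̃,r}ᵀ Φ_{ℓ̃,j̃}ᵀ Φ_{ℓ̃,ĩ} c_{ĩ,r} + (m²/m̃²) c_{j̃,r}ᵀ S_{j̃,ĩ} c_{ĩ,r} − 2 log c_{rr} ] is unbiased: its expectation over ĩ, j̃, r̃, ℓ̃ equals L_Σ(C). Here c_r denotes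 the r-th column of C and c_{ũ,r} its subvector at indices ũ. -/
/-!
Both sides split over the columns `c_r` of `C`: `L_Σ(C) = ∑_r ℓ_r` with
`ℓ_r = σ⁻² c_rᵀ ΦᵀΦ c_r + c_rᵀ S c_r - 2 log c_rr`, since `log det Σ = 2 ∑_r log c_rr` for
triangular `C`. Every coordinate of a uniformly random index vector is uniform, so
`(m/m̃) ∑_{r ∈ r̃}` is unbiased for `∑_r`, the subsampled bilinear form
`c_{j̃,r}ᵀ A_{j̃,ĩ} c_{ĩ,r}` has expectation `(m̃/m)² c_rᵀ A c_r`, and the subsampled Gram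
matrix `Φ_{ℓ̃,·}ᵀ Φ_{ℓ̃,·}` has expectation `(ñ/n) ΦᵀΦ`; the prefactors of the estimator undo
exactly these ratios.
-/

open Matrix BigOperators Finset

section Expectation

variable {ι κ ρ α β ν M 𝕜 : Type*}

theorem Fintype.expect_fun_apply [Fintype ι] [DecidableEq ι] [Fintype α] [AddCommMonoid M]
    [Module ℚ≥0 M] (a : ι) (g : α → M) : 𝔼 f : ι → α, g (f a) = 𝔼 x, g x := by
  cases isEmpty_or_nonempty α
  · have : IsEmpty (ι → α) := ⟨fun f => isEmptyElim (f a)⟩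
    simp [univ_eq_empty]
  · rw [Fintype.expect_equiv (Equiv.funSplitAt a α) (fun f => g (f a)) (fun p => g p.1)
        fun _ => rfl, ← univ_product_univ, expect_product]
    simp

theorem Fintype.expect_fun_sum_apply [Fintype ι] [DecidableEq ι] [Fintype α] [AddCommMonoid M]
    [Module ℚ≥0 M] (g : α → M) : 𝔼 f : ι → α, ∑ a, g (f a) = Fintype.card ι • 𝔼 x, g x := by
  simp [expect_sum_comm, Fintype.expect_fun_apply]

theorem Fintype.expect_card_div_card_mul_sum_fun_apply [Fintype ι] [DecidableEq ι] [Nonempty ι]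
    [Fintype α] [Semifield 𝕜] [CharZero 𝕜] (g : α → 𝕜) :
    𝔼 f : ι → α, (Fintype.card α / Fintype.card ι : 𝕜) * ∑ a, g (f a) = ∑ x, g x := by
  rw [← mul_expect, Fintype.expect_fun_sum_apply, Fintype.expect_eq_sum_div_card,
    nsmul_eq_mul]
  have : (Fintype.card ι : 𝕜) ≠ 0 := Nat.cast_ne_zero.mpr Fintype.card_ne_zero
  cases isEmpty_or_nonempty α
  · simp
  · field_simp

theorem Fintype.expect_expect_fun_apply [Fintype ι] [DecidableEq ι] [Fintype κ] [DecidableEq κ]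
    [Fintype α] [Fintype β] [AddCommMonoid M] [Module ℚ≥0 M] (a : ι) (b : κ) (g : α → β → M) :
    𝔼 f : ι → α, 𝔼 f' : κ → β, g (f a) (f' b) = 𝔼 x, 𝔼 y, g x y := by
  simp only [Fintype.expect_fun_apply b, Fintype.expect_fun_apply a (fun x => 𝔼 y, g x y)]

theorem Matrix.expect_apply [AddCommMonoid M] [Module ℚ≥0 M] (s : Finset ι)
    (A : ι → Matrix α β M) (a : α) (b : β) : (𝔼 i ∈ s, A i) a b = 𝔼 i ∈ s, A i a b := by
  simp [Finset.expect, Matrix.sum_apply]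

theorem Matrix.expect_dotProduct_mulVec [Fintype α] [Fintype β] [Semifield 𝕜] [CharZero 𝕜]
    (s : Finset ι) (u : α → 𝕜) (A : ι → Matrix α β 𝕜) (v : β → 𝕜) :
    𝔼 i ∈ s, u ⬝ᵥ A i *ᵥ v = u ⬝ᵥ (𝔼 i ∈ s, A i) *ᵥ v := by
  simp only [dotProduct, mulVec, Matrix.expect_apply, expect_sum_comm,
    ← mul_expect, ← expect_mul]

theorem Matrix.expect_transpose_submatrix_mul_submatrix [Fintype ρ] [DecidableEq ρ] [Fintype ν]
    [Semifield 𝕜] [CharZero 𝕜] (A : Matrix ν α 𝕜) (B : Matrix ν β 𝕜) (e₁ : ι → α) (e₂ : κ → β) :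
    𝔼 l : ρ → ν, (A.submatrix l e₁)ᵀ * B.submatrix l e₂
      = (Fintype.card ρ / Fintype.card ν : 𝕜) • (Aᵀ * B).submatrix e₁ e₂ := by
  ext i j
  simp only [Matrix.expect_apply, mul_apply, transpose_apply, submatrix_apply, smul_apply,
    Fintype.expect_fun_sum_apply (g := fun x => A x (e₁ i) * B x (e₂ j)),
    Fintype.expect_eq_sum_div_card, nsmul_eq_mul, smul_eq_mul]
  ring

theorem Matrix.expect_expect_dotProduct_submatrix_mulVec [Fintype ι] [DecidableEq ι] [Fintype κ]
    [DecidableEq κ] [Fintype α] [Fintype β] [Semifield 𝕜] [CharZero 𝕜]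
    (S : Matrix α β 𝕜) (u : α → 𝕜) (v : β → 𝕜) :
    𝔼 ii : ι → β, 𝔼 jj : κ → α, (fun b => u (jj b)) ⬝ᵥ S.submatrix jj ii *ᵥ (fun c => v (ii c))
      = (Fintype.card ι / Fintype.card β * (Fintype.card κ / Fintype.card α) : 𝕜)
          * (u ⬝ᵥ S *ᵥ v) := by
  simp only [dotProduct, mulVec, submatrix_apply, mul_sum, expect_sum_comm,
    Fintype.expect_expect_fun_apply (g := fun i j => u j * (S j i * v i))]
  simp only [Fintype.expect_eq_sum_div_card, sum_const, card_univ, nsmul_eq_mul, sum_div,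
    mul_sum]
  rw [sum_comm]
  exact sum_congr rfl fun _ _ => sum_congr rfl fun _ _ => by ring

end Expectation

section Objective

variable {α ν : Type*} [Fintype α] [Fintype ν]

noncomputable def covLossColumn (Φ : Matrix ν α ℝ) (S : Matrix α α ℝ) (σ2 : ℝ)
    (C : Matrix α α ℝ) (r : α) : ℝ :=
  1 / σ2 * ((fun i => C i r) ⬝ᵥ (Φᵀ * Φ) *ᵥ (fun i => C i r))
    + (fun i => C i r) ⬝ᵥ S *ᵥ (fun i => C i r) - 2 * Real.log (C r r)

theorem expect_covLossColumn_estimator {ι κ : Type*} [Fintype ι] [DecidableEq ι] [Nonempty ι]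
    [Fintype κ] [DecidableEq κ] [Nonempty κ] [Nonempty ν]
    (Φ : Matrix ν α ℝ) (S : Matrix α α ℝ) (σ2 : ℝ) (C : Matrix α α ℝ) (r : α) :
    𝔼 ii : ι → α, 𝔼 jj : ι → α, 𝔼 ll : κ → ν,
      ((Fintype.card ν : ℝ) * Fintype.card α ^ 2 / (σ2 * Fintype.card κ * Fintype.card ι ^ 2) *
          ((fun b => C (jj b) r) ⬝ᵥ ((Φ.submatrix ll jj)ᵀ * Φ.submatrix ll ii) *ᵥ
            (fun b => C (ii b) r))
        + (Fintype.card α : ℝ) ^ 2 / (Fintype.card ι : ℝ) ^ 2 *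
          ((fun b => C (jj b) r) ⬝ᵥ S.submatrix jj ii *ᵥ (fun b => C (ii b) r))
        - 2 * Real.log (C r r))
      = covLossColumn Φ S σ2 C r := by
  have : Nonempty α := ⟨r⟩
  simp only [expect_add_distrib, expect_sub_distrib, ← mul_expect, Fintype.expect_const,
    Matrix.expect_dotProduct_mulVec, Matrix.expect_transpose_submatrix_mul_submatrix,
    smul_mulVec, dotProduct_smul, smul_eq_mul,
    Matrix.expect_expect_dotProduct_submatrix_mulVec (u := fun i => C i r) (v := fun i => C i r)]
  have : (Fintype.card α : ℝ) ≠ 0 := Nat.cast_ne_zero.mpr Fintype.card_ne_zero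
  have : (Fintype.card ι : ℝ) ≠ 0 := Nat.cast_ne_zero.mpr Fintype.card_ne_zero
  have : (Fintype.card κ : ℝ) ≠ 0 := Nat.cast_ne_zero.mpr Fintype.card_ne_zero
  have : (Fintype.card ν : ℝ) ≠ 0 := Nat.cast_ne_zero.mpr Fintype.card_ne_zero
  rw [covLossColumn]
  field_simp

theorem Matrix.sum_mul_apply_sq_eq_sum_dotProduct {β R : Type*} [Fintype β] [CommSemiring R]
    (Φ : Matrix ν α R) (C : Matrix α β R) :
    ∑ i, ∑ j, ((Φ * C) i j) ^ 2 = ∑ r, (fun i => C i r) ⬝ᵥ (Φᵀ * Φ) *ᵥ (fun i => C i r) := by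
  have hcol (r : β) :
      (fun i => C i r) ⬝ᵥ (Φᵀ * Φ) *ᵥ (fun i => C i r) = ∑ x, (Φ * C) x r ^ 2 := by
    rw [← mulVec_mulVec, dotProduct_mulVec, vecMul_transpose]
    simp only [dotProduct, sq]
    rfl
  rw [sum_comm]
  simp only [hcol]

theorem Matrix.trace_mul_mul_transpose_eq_sum_dotProduct {β R : Type*} [Fintype β]
    [CommSemiring R] (S : Matrix α α R) (C : Matrix α β R) :
    (S * (C * Cᵀ)).trace = ∑ r, (fun i => C i r) ⬝ᵥ S *ᵥ (fun i => C i r) := by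
  rw [← Matrix.mul_assoc, trace_mul_comm]
  rfl

theorem Real.log_det_mul_transpose_of_isLowerTriangular [LinearOrder α] {C : Matrix α α ℝ}
    (hC : C.IsLowerTriangular) (hdiag : ∀ r, C r r ≠ 0) :
    Real.log (C * Cᵀ).det = 2 * ∑ r, Real.log (C r r) := by
  rw [det_mul, det_transpose, det_of_isLowerTriangular C hC, ← sq,
    Real.log_pow, Real.log_prod fun r _ => hdiag r]
  push_cast
  rfl

theorem sum_covLossColumn [LinearOrder α] (Φ : Matrix ν α ℝ) (S : Matrix α α ℝ) (σ2 : ℝ)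
    {C : Matrix α α ℝ} (hC : C.IsLowerTriangular) (hdiag : ∀ r, C r r ≠ 0) :
    ∑ r, covLossColumn Φ S σ2 C r
      = 1 / σ2 * ∑ i, ∑ j, ((Φ * C) i j) ^ 2 + (S * (C * Cᵀ)).trace - Real.log (C * Cᵀ).det := by
  simp only [covLossColumn, sum_sub_distrib, sum_add_distrib, ← mul_sum,
    sum_mul_apply_sq_eq_sum_dotProduct, trace_mul_mul_transpose_eq_sum_dotProduct,
    Real.log_det_mul_transpose_of_isLowerTriangular hC hdiag]

end Objective

theorem quadruply_stochastic_cov_estimator_unbiased_general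
    (n m m' n' : ℕ) (hn : 0 < n) (hm' : 0 < m') (hn' : 0 < n')
    (Φ : Matrix (Fin n) (Fin m) ℝ) (S : Matrix (Fin m) (Fin m) ℝ)
    (σ2 : ℝ)
    (C : Matrix (Fin m) (Fin m) ℝ)
    (hlow : ∀ i j : Fin m, i < j → C i j = 0)
    (hdiag : ∀ r : Fin m, 0 < C r r) :
    (∑ ii : Fin m' → Fin m, ∑ jj : Fin m' → Fin m, ∑ rr : Fin m' → Fin m,
        ∑ ll : Fin n' → Fin n,
        ((m : ℝ) / m') * ∑ a : Fin m',
          (((n : ℝ) * m ^ 2 / (σ2 * n' * m' ^ 2)) *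
              ((fun b => C (jj b) (rr a)) ⬝ᵥ
                ((Φ.submatrix ll jj)ᵀ * Φ.submatrix ll ii) *ᵥ (fun b => C (ii b) (rr a)))
            + ((m : ℝ) ^ 2 / (m' : ℝ) ^ 2) *
              ((fun b => C (jj b) (rr a)) ⬝ᵥ (S.submatrix jj ii) *ᵥ
                (fun b => C (ii b) (rr a)))
            - 2 * Real.log (C (rr a) (rr a))))
      / ((Fintype.card (Fin m' → Fin m) : ℝ) * (Fintype.card (Fin m' → Fin m)) *
          (Fintype.card (Fin m' → Fin m)) * (Fintype.card (Fin n' → Fin n)))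
    = (1 / σ2) * (∑ i : Fin n, ∑ j : Fin m, ((Φ * C) i j) ^ 2)
        + (S * (C * Cᵀ)).trace - Real.log (C * Cᵀ).det := by
  have : Nonempty (Fin n) := Fin.pos_iff_nonempty.mp hn
  have : Nonempty (Fin m') := Fin.pos_iff_nonempty.mp hm'
  have : Nonempty (Fin n') := Fin.pos_iff_nonempty.mp hn'
  have hcol := fun r => expect_covLossColumn_estimator (ι := Fin m') (κ := Fin n') Φ S σ2 C r
  have hrr := Fintype.expect_card_div_card_mul_sum_fun_apply (ι := Fin m') (𝕜 := ℝ)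
    (covLossColumn Φ S σ2 C)
  simp only [Fintype.card_fin] at hcol hrr
  rw [← sum_covLossColumn Φ S σ2 (fun i j h => hlow i j h) fun r => (hdiag r).ne', ← hrr]
  -- `← hcol` turns the right side into the iterated expectation of the estimator, `r̃` outermost.
  simp only [← hcol, mul_expect, ← expect_sum_comm]
  rw [expect_comm]
  conv_rhs => enter [2, ii]; rw [expect_comm]
  simp only [Fintype.expect_eq_sum_div_card, ← sum_div, div_div]
  congr 1
  ring

/-- Theorem 2 of the paper: the quadruply stochastic estimator of the
variational-covariance objective
`L_Σ(C) = (1/σ²)·Σ_entries((ΦC)²) + tr(SΣ) − log det Σ`, with `Σ = CCᵀ` and `C` lower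
triangular with positive diagonal, is unbiased.  Here `m'` plays the role of `m̃` and `n'`
of `ñ`; the random index vectors `ii, jj, rr : Fin m' → Fin m` and `ll : Fin n' → Fin n`
have i.i.d. uniform entries and are mutually independent, formalized by taking the
expectation to be the uniform average over all such index functions. -/
theorem quadruply_stochastic_cov_estimator_unbiased
    (n m m' n' : ℕ) (hn : 0 < n) (hm : 0 < m) (hm' : 0 < m') (hn' : 0 < n')
    (Φ : Matrix (Fin n) (Fin m) ℝ) (S : Matrix (Fin m) (Fin m) ℝ)
    (σ2 : ℝ) (hσ : 0 < σ2)
    (C : Matrix (Fin m) (Fin m) ℝ)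
    (hlow : ∀ i j : Fin m, i < j → C i j = 0)
    (hdiag : ∀ r : Fin m, 0 < C r r) :
    (∑ ii : Fin m' → Fin m, ∑ jj : Fin m' → Fin m, ∑ rr : Fin m' → Fin m,
        ∑ ll : Fin n' → Fin n,
        ((m : ℝ) / m') * ∑ a : Fin m',
          (((n : ℝ) * m ^ 2 / (σ2 * n' * m' ^ 2)) *
              ((fun b => C (jj b) (rr a)) ⬝ᵥ
                ((Φ.submatrix ll jj)ᵀ * Φ.submatrix ll ii) *ᵥ (fun b => C (ii b) (rr a)))
            + ((m : ℝ) ^ 2 / (m' : ℝ) ^ 2) *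
              ((fun b => C (jj b) (rr a)) ⬝ᵥ (S.submatrix jj ii) *ᵥ
                (fun b => C (ii b) (rr a)))
            - 2 * Real.log (C (rr a) (rr a))))
      / ((Fintype.card (Fin m' → Fin m) : ℝ) * (Fintype.card (Fin m' → Fin m)) *
          (Fintype.card (Fin m' → Fin m)) * (Fintype.card (Fin n' → Fin n)))
    = (1 / σ2) * (∑ i : Fin n, ∑ j : Fin m, ((Φ * C) i j) ^ 2)
        + (S * (C * Cᵀ)).trace - Real.log (C * Cᵀ).det :=
  quadruply_stochastic_cov_estimator_unbiased_general n m m' n' hn hm' hn' Φ S σ2 C hlow hdiag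
end

section
/- Let k* ∈ ℝ^n, let k** ≥ 0, σ² > 0, and suppose k*ᵀk* + σ²k** > 0. Consider the augmented variational model in which a basis function centered at the test point is appended, with variational Cholesky factor C' ∈ ℝ^{(n+1)×(n+1)} satisfying c'_{n+1,i} = 0 for i = 1,…,n (no posterior correlation between the augmented basis function and the others). Then the augmented objective decomposes as L'_Σ(C') = L_Σ(C'_{1:n,1:n}) + (1/σ²)(k*ᵀk* + σ²k**)·(c'_{n+1,n+1})² − 2 log c'_{n+1,n+1}, the unique minimizer over c'_{n+1,n+1} > 0 is c'_{n+1,n+1} = √(σ²/(k*ᵀk* + σ²k**)), and the resulting augmented predictive variance is V[y*] = k*ᵀ Σ k* + σ² (k**)² / (k*ᵀk* + σ²k**), where Σ = C'_{1:n,1:n} C'_{1:n,1:n}ᵀ. -/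
open Matrix BigOperators

private lemma aux_log_ineq (t : ℝ) (ht : 0 < t) (hne : t ≠ 1) :
    Real.log (t ^ 2) < t ^ 2 - 1 := by
  refine Real.log_lt_sub_one_of_pos (by positivity) (fun h => hne ?_)
  nlinarith [sq_nonneg (t - 1), sq_nonneg (t + 1)]

/-- Proposition 4 of the paper, augmentation: with the augmented feature
matrix `Φ = [K, k*]`, augmented prior precision `S = [[K, k*],[k*ᵀ, k**]]`, and an augmented
Cholesky factor `C'` that is lower triangular with positive diagonal and has no posterior
correlation between the augmented basis function and the others (`c'_{n+1,i} = 0` for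
`i ≤ n`), the augmented objective decomposes as
`L'_Σ(C') = L_Σ(C'_{1:n,1:n}) + (1/σ²)(k*ᵀk* + σ²k**) c'² − 2 log c'`,
its unique minimizer over `c' > 0` is `√(σ²/(k*ᵀk* + σ²k**))`, and at that minimizer the
augmented predictive variance `φ*ᵀ C'C'ᵀ φ*` equals
`k*ᵀ Σ k* + σ²(k**)²/(k*ᵀk* + σ²k**)` with `Σ = C'_{1:n,1:n} C'_{1:n,1:n}ᵀ`. -/
theorem augmented_predictive_variance
    (n : ℕ) (K : Matrix (Fin n) (Fin n) ℝ) (kstar : Fin n → ℝ) (kss : ℝ)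
    (hkss : 0 ≤ kss) (σ2 : ℝ) (hσ : 0 < σ2)
    (hpos : 0 < kstar ⬝ᵥ kstar + σ2 * kss)
    (C' : Matrix (Fin (n + 1)) (Fin (n + 1)) ℝ)
    (hlow : ∀ i j : Fin (n + 1), i < j → C' i j = 0)
    (hdiag : ∀ i : Fin (n + 1), 0 < C' i i)
    (hzero : ∀ i : Fin n, C' (Fin.last n) i.castSucc = 0) :
    let Φaug : Matrix (Fin n) (Fin (n + 1)) ℝ :=
      Matrix.of fun i => Fin.snoc (K i) (kstar i)
    let Saug : Matrix (Fin (n + 1)) (Fin (n + 1)) ℝ :=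
      Matrix.of (Fin.snoc (fun i' => Fin.snoc (K i') (kstar i'))
        (Fin.snoc kstar kss))
    let φstar : Fin (n + 1) → ℝ := Fin.snoc kstar kss
    let Csub : Matrix (Fin n) (Fin n) ℝ := C'.submatrix Fin.castSucc Fin.castSucc
    let c' : ℝ := C' (Fin.last n) (Fin.last n)
    let copt : ℝ := Real.sqrt (σ2 / (kstar ⬝ᵥ kstar + σ2 * kss))
    -- (1) the augmented objective decomposes
    ((1 / σ2) * (∑ i : Fin n, ∑ j : Fin (n + 1), ((Φaug * C') i j) ^ 2)
        + (Saug * (C' * C'ᵀ)).trace - Real.log (C' * C'ᵀ).det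
      = ((1 / σ2) * (∑ i : Fin n, ∑ j : Fin n, ((K * Csub) i j) ^ 2)
          + (K * (Csub * Csubᵀ)).trace - Real.log (Csub * Csubᵀ).det)
        + (1 / σ2) * (kstar ⬝ᵥ kstar + σ2 * kss) * c' ^ 2 - 2 * Real.log c')
    -- (2) the unique minimizer over the last diagonal entry
    ∧ (∀ c : ℝ, 0 < c → c ≠ copt →
        (1 / σ2) * (kstar ⬝ᵥ kstar + σ2 * kss) * copt ^ 2 - 2 * Real.log copt
          < (1 / σ2) * (kstar ⬝ᵥ kstar + σ2 * kss) * c ^ 2 - 2 * Real.log c)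
    -- (3) the resulting augmented predictive variance
    ∧ (c' = copt →
        φstar ⬝ᵥ (C' * C'ᵀ) *ᵥ φstar
          = kstar ⬝ᵥ (Csub * Csubᵀ) *ᵥ kstar
              + σ2 * kss ^ 2 / (kstar ⬝ᵥ kstar + σ2 * kss)) := by
  intro Φaug Saug φstar Csub c' copt
  set a : ℝ := kstar ⬝ᵥ kstar + σ2 * kss with ha
  have hc' : 0 < c' := hdiag _
  have hColZero : ∀ i : Fin n, C' i.castSucc (Fin.last n) = 0 :=
    fun i => hlow _ _ (Fin.castSucc_lt_last i)
  set N : Matrix (Fin n) (Fin n) ℝ := Csub * Csubᵀ with hNdef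
  set M : Matrix (Fin (n + 1)) (Fin (n + 1)) ℝ := C' * C'ᵀ with hMdef
  -- block structure of M = C' * C'ᵀ
  have hM1 : ∀ i j : Fin n, M i.castSucc j.castSucc = N i j := by
    intro i j
    rw [hMdef, hNdef]
    simp [Matrix.mul_apply, Fin.sum_univ_castSucc, hColZero, Csub, Matrix.transpose_apply]
  have hM2 : ∀ j : Fin n, M (Fin.last n) j.castSucc = 0 := by
    intro j
    rw [hMdef]
    simp [Matrix.mul_apply, Fin.sum_univ_castSucc, hzero, hColZero]
  have hM3 : ∀ i : Fin n, M i.castSucc (Fin.last n) = 0 := by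
    intro i
    rw [hMdef]
    simp [Matrix.mul_apply, Fin.sum_univ_castSucc, hzero, hColZero]
  have hM4 : M (Fin.last n) (Fin.last n) = c' ^ 2 := by
    rw [hMdef]
    simp [Matrix.mul_apply, Fin.sum_univ_castSucc, hzero, sq, c']
  -- determinants
  have hdetC : C'.det = (∏ i : Fin n, Csub i i) * c' := by
    rw [Matrix.det_of_lowerTriangular C' (fun i j h => hlow i j h),
      Fin.prod_univ_castSucc]
    rfl
  have hdetCsub : Csub.det = ∏ i : Fin n, Csub i i := by
    exact Matrix.det_of_lowerTriangular Csub
      (fun i j h => hlow _ _ (Fin.castSucc_lt_castSucc_iff.mpr h))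
  have hprodpos : 0 < ∏ i : Fin n, Csub i i :=
    Finset.prod_pos (fun i _ => hdiag i.castSucc)
  have hdetS : N.det = (∏ i : Fin n, Csub i i) ^ 2 := by
    rw [hNdef, Matrix.det_mul, Matrix.det_transpose, hdetCsub, sq]
  have hdetBig : M.det = N.det * c' ^ 2 := by
    rw [hMdef, Matrix.det_mul, Matrix.det_transpose, hdetC, hdetS]
    ring
  have hlogdet : Real.log M.det = Real.log N.det + 2 * Real.log c' := by
    rw [hdetBig, Real.log_mul (by rw [hdetS]; positivity) (by positivity),
      Real.log_pow]
    push_cast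
    ring
  -- the feature-matrix product
  have hP1 : ∀ (i : Fin n) (j : Fin n), (Φaug * C') i j.castSucc = (K * Csub) i j := by
    intro i j
    simp [Matrix.mul_apply, Fin.sum_univ_castSucc, Φaug, Csub, hzero]
  have hP2 : ∀ i : Fin n, (Φaug * C') i (Fin.last n) = kstar i * c' := by
    intro i
    simp [Matrix.mul_apply, Fin.sum_univ_castSucc, Φaug, hColZero, c']
  -- trace
  have htrace : (Saug * M).trace = (K * N).trace + kss * c' ^ 2 := by
    rw [Matrix.trace, Matrix.trace, Fin.sum_univ_castSucc]
    have hdiag1 : ∀ i : Fin n, (Saug * M).diag i.castSucc = (K * N).diag i := by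
      intro i
      simp only [Matrix.diag_apply, Matrix.mul_apply, Fin.sum_univ_castSucc, hM2,
        mul_zero, add_zero]
      refine Finset.sum_congr rfl fun j _ => ?_
      rw [hM1]
      simp [Saug]
    have hdiag2 : (Saug * M).diag (Fin.last n) = kss * c' ^ 2 := by
      simp only [Matrix.diag_apply, Matrix.mul_apply, Fin.sum_univ_castSucc, hM3, hM4,
        mul_zero]
      simp [Saug]
    rw [hdiag2, Finset.sum_congr rfl fun i _ => hdiag1 i]
  -- the squared-entry sum
  have hsum : ∑ i : Fin n, ∑ j : Fin (n + 1), ((Φaug * C') i j) ^ 2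
      = (∑ i : Fin n, ∑ j : Fin n, ((K * Csub) i j) ^ 2)
        + (kstar ⬝ᵥ kstar) * c' ^ 2 := by
    have h1 : ∀ i : Fin n, ∑ j : Fin (n + 1), ((Φaug * C') i j) ^ 2
        = (∑ j : Fin n, ((K * Csub) i j) ^ 2) + (kstar i * c') ^ 2 := by
      intro i
      rw [Fin.sum_univ_castSucc, hP2]
      congr 1
      exact Finset.sum_congr rfl fun j _ => by rw [hP1]
    rw [Finset.sum_congr rfl fun i _ => h1 i, Finset.sum_add_distrib]
    congr 1
    rw [dotProduct, Finset.sum_mul]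
    exact Finset.sum_congr rfl fun i _ => by ring
  -- optimal value
  have hcoptpos : 0 < copt := Real.sqrt_pos.mpr (div_pos hσ hpos)
  have hcoptsq : copt ^ 2 = σ2 / a := Real.sq_sqrt (le_of_lt (div_pos hσ hpos))
  refine ⟨?_, ?_, ?_⟩
  · -- (1)
    rw [hsum, htrace, hlogdet]
    field_simp
    ring
  · -- (2)
    intro c hc hne
    have ht : 0 < c / copt := div_pos hc hcoptpos
    have ht1 : c / copt ≠ 1 := fun h => hne (by field_simp at h; exact h)
    have key := aux_log_ineq (c / copt) ht ht1
    have hlog : Real.log ((c / copt) ^ 2) = 2 * Real.log c - 2 * Real.log copt := by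
      rw [Real.log_pow, Real.log_div (ne_of_gt hc) (ne_of_gt hcoptpos)]
      push_cast; ring
    have htsq : (c / copt) ^ 2 = (1 / σ2) * a * c ^ 2 := by
      rw [div_pow, hcoptsq]
      field_simp
    have hval : (1 / σ2) * a * copt ^ 2 = 1 := by
      rw [hcoptsq]; field_simp
    rw [hlog, htsq] at key
    linarith
  · -- (3)
    intro hcopt
    have hquad : φstar ⬝ᵥ M *ᵥ φstar = kstar ⬝ᵥ N *ᵥ kstar + kss ^ 2 * c' ^ 2 := by
      simp only [dotProduct, Matrix.mulVec, dotProduct]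
      rw [Fin.sum_univ_castSucc]
      have hrow : ∀ i : Fin n,
          φstar i.castSucc * ∑ j : Fin (n + 1), M i.castSucc j * φstar j
          = kstar i * ∑ j : Fin n, N i j * kstar j := by
        intro i
        rw [Fin.sum_univ_castSucc, hM3, zero_mul, add_zero]
        simp only [φstar, Fin.snoc_castSucc]
        congr 1
        exact Finset.sum_congr rfl fun j _ => by rw [hM1]
      have hlastrow : φstar (Fin.last n)
          * ∑ j : Fin (n + 1), M (Fin.last n) j * φstar j = kss ^ 2 * c' ^ 2 := by
        rw [Fin.sum_univ_castSucc, hM4]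
        simp only [φstar, Fin.snoc_last]
        rw [Finset.sum_eq_zero fun j _ => by rw [hM2 j, zero_mul]]
        ring
      rw [hlastrow, Finset.sum_congr rfl fun i _ => hrow i]
    rw [hquad, hcopt, hcoptsq]
    field_simp
end

section
/- Let n, m, m̃, ñ be positive integers, Φ ∈ ℝ^{n×m}, and x ∈ ℝ^m. Let ĩ, j̃ ∈ {1,…,m}^{m̃} and ℓ̃ ∈ {1,…,n}^{ñ} be random index vectors with i.i.d. uniform entries, mutually independent. Then E[ (nm²/(ñm̃²)) · x_{j̃}ᵀ Φ_{ℓ̃,j̃}ᵀ Φ_{ℓ̃,ĩ} x_{ĩ} ] = xᵀΦᵀΦx, where Φ_{ℓ̃,ĩ} is the ñ×m̃ submatrix with (a,b)-entry Φ_{ℓ̃_a, ĩ_b}. -/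
open Matrix BigOperators

lemma sum_fun_apply {α β : Type*} [Fintype α] [DecidableEq α] [Fintype β] (g : β → ℝ) (a : α) :
    ∑ f : α → β, g (f a) = (Fintype.card β : ℝ)^(Fintype.card α - 1) * ∑ b, g b := by
  rw [← (Equiv.funSplitAt a β).symm.sum_comp]
  simp [Fintype.sum_prod_type, Finset.mul_sum, mul_comm, Finset.sum_mul]

lemma sum_fun_apply2 {α β : Type*} [Fintype α] [DecidableEq α] [Fintype β] (g : β → ℝ) :
    ∑ f : α → β, ∑ a : α, g (f a)
    = (Fintype.card α : ℝ) * (Fintype.card β : ℝ)^(Fintype.card α - 1) * ∑ b, g b := by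
  rw [Finset.sum_comm]
  simp only [sum_fun_apply]
  rw [Finset.sum_const, Finset.card_univ, nsmul_eq_mul, mul_assoc]

lemma triple_sum (n m m' n' : ℕ) (F : Fin n → Fin m → Fin m → ℝ) :
    ∑ ii : Fin m' → Fin m, ∑ jj : Fin m' → Fin m, ∑ ll : Fin n' → Fin n,
      ∑ a : Fin n', ∑ b : Fin m', ∑ c : Fin m', F (ll a) (jj b) (ii c)
    = ((n' : ℝ) * (n : ℝ)^(n'-1)) * (((m' : ℝ) * (m : ℝ)^(m'-1)) * ((m' : ℝ) * (m : ℝ)^(m'-1)))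
        * ∑ l, ∑ j, ∑ i, F l j i := by
  have hA : ∀ (ii jj : Fin m' → Fin m),
      ∑ ll : Fin n' → Fin n, ∑ a : Fin n', ∑ b : Fin m', ∑ c : Fin m',
        F (ll a) (jj b) (ii c)
      = ((n' : ℝ) * (n : ℝ)^(n'-1)) * ∑ l, ∑ b : Fin m', ∑ c : Fin m', F l (jj b) (ii c) := by
    intro ii jj
    simpa using sum_fun_apply2 (α := Fin n') (β := Fin n)
      (fun l => ∑ b : Fin m', ∑ c : Fin m', F l (jj b) (ii c))
  have hB : ∀ (ii : Fin m' → Fin m) (l : Fin n),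
      ∑ jj : Fin m' → Fin m, ∑ b : Fin m', ∑ c : Fin m', F l (jj b) (ii c)
      = ((m' : ℝ) * (m : ℝ)^(m'-1)) * ∑ j, ∑ c : Fin m', F l j (ii c) := by
    intro ii l
    simpa using sum_fun_apply2 (α := Fin m') (β := Fin m)
      (fun j => ∑ c : Fin m', F l j (ii c))
  have hC : ∀ (l : Fin n) (j : Fin m),
      ∑ ii : Fin m' → Fin m, ∑ c : Fin m', F l j (ii c)
      = ((m' : ℝ) * (m : ℝ)^(m'-1)) * ∑ i, F l j i := by
    intro l j
    simpa using sum_fun_apply2 (α := Fin m') (β := Fin m) (fun i => F l j i)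
  calc ∑ ii : Fin m' → Fin m, ∑ jj : Fin m' → Fin m, ∑ ll : Fin n' → Fin n,
        ∑ a : Fin n', ∑ b : Fin m', ∑ c : Fin m', F (ll a) (jj b) (ii c)
      = ∑ ii : Fin m' → Fin m, ∑ jj : Fin m' → Fin m,
          ((n' : ℝ) * (n : ℝ)^(n'-1)) * ∑ l, ∑ b : Fin m', ∑ c : Fin m', F l (jj b) (ii c) :=
        Finset.sum_congr rfl fun ii _ => Finset.sum_congr rfl fun jj _ => hA ii jj
    _ = ∑ ii : Fin m' → Fin m, ((n' : ℝ) * (n : ℝ)^(n'-1)) *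
          ∑ jj : Fin m' → Fin m, ∑ l, ∑ b : Fin m', ∑ c : Fin m', F l (jj b) (ii c) :=
        Finset.sum_congr rfl fun ii _ => (Finset.mul_sum _ _ _).symm
    _ = ((n' : ℝ) * (n : ℝ)^(n'-1)) * ∑ ii : Fin m' → Fin m,
          ∑ jj : Fin m' → Fin m, ∑ l, ∑ b : Fin m', ∑ c : Fin m', F l (jj b) (ii c) :=
        (Finset.mul_sum _ _ _).symm
    _ = ((n' : ℝ) * (n : ℝ)^(n'-1)) * ∑ ii : Fin m' → Fin m,
          ∑ l, ∑ jj : Fin m' → Fin m, ∑ b : Fin m', ∑ c : Fin m', F l (jj b) (ii c) := by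
        congr 1
        exact Finset.sum_congr rfl fun ii _ => Finset.sum_comm
    _ = ((n' : ℝ) * (n : ℝ)^(n'-1)) * ∑ ii : Fin m' → Fin m,
          ∑ l, ((m' : ℝ) * (m : ℝ)^(m'-1)) * ∑ j, ∑ c : Fin m', F l j (ii c) := by
        congr 1
        exact Finset.sum_congr rfl fun ii _ => Finset.sum_congr rfl fun l _ => hB ii l
    _ = ((n' : ℝ) * (n : ℝ)^(n'-1)) * ∑ ii : Fin m' → Fin m,
          ((m' : ℝ) * (m : ℝ)^(m'-1)) * ∑ l, ∑ j, ∑ c : Fin m', F l j (ii c) := by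
        congr 1
        exact Finset.sum_congr rfl fun ii _ => (Finset.mul_sum _ _ _).symm
    _ = ((n' : ℝ) * (n : ℝ)^(n'-1)) * (((m' : ℝ) * (m : ℝ)^(m'-1)) *
          ∑ ii : Fin m' → Fin m, ∑ l, ∑ j, ∑ c : Fin m', F l j (ii c)) := by
        congr 1
        exact (Finset.mul_sum _ _ _).symm
    _ = ((n' : ℝ) * (n : ℝ)^(n'-1)) * (((m' : ℝ) * (m : ℝ)^(m'-1)) *
          ∑ l, ∑ ii : Fin m' → Fin m, ∑ j, ∑ c : Fin m', F l j (ii c)) := by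
        congr 2
        exact Finset.sum_comm
    _ = ((n' : ℝ) * (n : ℝ)^(n'-1)) * (((m' : ℝ) * (m : ℝ)^(m'-1)) *
          ∑ l, ∑ j, ∑ ii : Fin m' → Fin m, ∑ c : Fin m', F l j (ii c)) := by
        congr 2
        exact Finset.sum_congr rfl fun l _ => Finset.sum_comm
    _ = ((n' : ℝ) * (n : ℝ)^(n'-1)) * (((m' : ℝ) * (m : ℝ)^(m'-1)) *
          ∑ l, ∑ j, ((m' : ℝ) * (m : ℝ)^(m'-1)) * ∑ i, F l j i) := by
        congr 2
        exact Finset.sum_congr rfl fun l _ => Finset.sum_congr rfl fun j _ => hC l j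
    _ = ((n' : ℝ) * (n : ℝ)^(n'-1)) * (((m' : ℝ) * (m : ℝ)^(m'-1)) *
          ∑ l, ((m' : ℝ) * (m : ℝ)^(m'-1)) * ∑ j, ∑ i, F l j i) := by
        congr 2
        exact Finset.sum_congr rfl fun l _ => (Finset.mul_sum _ _ _).symm
    _ = ((n' : ℝ) * (n : ℝ)^(n'-1)) * (((m' : ℝ) * (m : ℝ)^(m'-1)) *
          (((m' : ℝ) * (m : ℝ)^(m'-1)) * ∑ l, ∑ j, ∑ i, F l j i)) := by
        congr 2
        exact (Finset.mul_sum _ _ _).symm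
    _ = _ := by ring

/-- the triple-sampling identity: the quadratic form `xᵀΦᵀΦx` is estimated
without bias by sub-sampling the rows of `Φ` (index vector `ll : Fin n' → Fin n`, with `n'`
playing the role of `ñ`) and independently sub-sampling the two column index sets
(`ii, jj : Fin m' → Fin m`, with `m'` playing the role of `m̃`), rescaling by `nm²/(ñm̃²)`.
Expectation is the uniform average over all index functions. -/
theorem triply_stochastic_quadratic_form_unbiased
    (n m m' n' : ℕ) (hn : 0 < n) (hm : 0 < m) (hm' : 0 < m') (hn' : 0 < n')
    (Φ : Matrix (Fin n) (Fin m) ℝ) (x : Fin m → ℝ) :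
    (∑ ii : Fin m' → Fin m, ∑ jj : Fin m' → Fin m, ∑ ll : Fin n' → Fin n,
        ((n : ℝ) * m ^ 2 / (n' * (m' : ℝ) ^ 2)) *
          ((x ∘ jj) ⬝ᵥ ((Φ.submatrix ll jj)ᵀ * Φ.submatrix ll ii) *ᵥ (x ∘ ii)))
      / ((Fintype.card (Fin m' → Fin m) : ℝ) * (Fintype.card (Fin m' → Fin m)) *
          (Fintype.card (Fin n' → Fin n)))
    = x ⬝ᵥ (Φᵀ * Φ) *ᵥ x := by
  set F : Fin n → Fin m → Fin m → ℝ := fun l j i => x j * Φ l j * (Φ l i * x i) with hF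
  have key : ∀ (ll : Fin n' → Fin n) (ii jj : Fin m' → Fin m),
      (x ∘ jj) ⬝ᵥ ((Φ.submatrix ll jj)ᵀ * Φ.submatrix ll ii) *ᵥ (x ∘ ii)
      = ∑ a : Fin n', ∑ b : Fin m', ∑ c : Fin m', F (ll a) (jj b) (ii c) := by
    intro ll ii jj
    simp only [hF, dotProduct, mulVec, Matrix.mul_apply, transpose_apply, submatrix_apply,
      Function.comp_apply, Finset.mul_sum, Finset.sum_mul]
    conv_lhs => enter [2, b]; rw [Finset.sum_comm]
    rw [Finset.sum_comm]
    refine Finset.sum_congr rfl fun a _ => Finset.sum_congr rfl fun b _ =>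
      Finset.sum_congr rfl fun c _ => by ring
  have hrhs : x ⬝ᵥ (Φᵀ * Φ) *ᵥ x = ∑ l, ∑ j, ∑ i, F l j i := by
    simp only [hF, dotProduct, mulVec, Matrix.mul_apply, transpose_apply, Finset.mul_sum,
      Finset.sum_mul]
    conv_lhs => enter [2, j]; rw [Finset.sum_comm]
    rw [Finset.sum_comm]
    refine Finset.sum_congr rfl fun l _ => Finset.sum_congr rfl fun j _ =>
      Finset.sum_congr rfl fun i _ => by ring
  simp only [key]
  have pull : ∑ ii : Fin m' → Fin m, ∑ jj : Fin m' → Fin m, ∑ ll : Fin n' → Fin n,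
      ((n : ℝ) * m ^ 2 / (n' * (m' : ℝ) ^ 2)) *
        (∑ a : Fin n', ∑ b : Fin m', ∑ c : Fin m', F (ll a) (jj b) (ii c))
      = ((n : ℝ) * m ^ 2 / (n' * (m' : ℝ) ^ 2)) *
        ∑ ii : Fin m' → Fin m, ∑ jj : Fin m' → Fin m, ∑ ll : Fin n' → Fin n,
          ∑ a : Fin n', ∑ b : Fin m', ∑ c : Fin m', F (ll a) (jj b) (ii c) := by
    rw [Finset.mul_sum]
    refine Finset.sum_congr rfl fun ii _ => ?_
    rw [Finset.mul_sum]
    exact Finset.sum_congr rfl fun jj _ => (Finset.mul_sum _ _ _).symm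
  rw [pull, triple_sum n m m' n' F, hrhs]
  simp only [Fintype.card_fun, Fintype.card_fin, Nat.cast_pow]
  have hm1 : ((m : ℝ)) * (m : ℝ) ^ (m' - 1) = (m : ℝ) ^ m' := by
    rw [← pow_succ', Nat.sub_add_cancel hm']
  have hn1 : ((n : ℝ)) * (n : ℝ) ^ (n' - 1) = (n : ℝ) ^ n' := by
    rw [← pow_succ', Nat.sub_add_cancel hn']
  have hD : ((m : ℝ) ^ m' * (m : ℝ) ^ m' * (n : ℝ) ^ n') ≠ 0 := by positivity
  rw [div_eq_iff hD]
  have hfact : ((n : ℝ) * m ^ 2 / (n' * (m' : ℝ) ^ 2)) *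
      (((n' : ℝ) * (n : ℝ)^(n'-1)) * (((m' : ℝ) * (m : ℝ)^(m'-1)) * ((m' : ℝ) * (m : ℝ)^(m'-1))))
      = (m : ℝ) ^ m' * (m : ℝ) ^ m' * (n : ℝ) ^ n' := by
    have hn'0 : ((n' : ℝ)) ≠ 0 := Nat.cast_ne_zero.mpr hn'.ne'
    have hm'0 : ((m' : ℝ)) ≠ 0 := Nat.cast_ne_zero.mpr hm'.ne'
    field_simp
    rw [← hm1, ← hn1]
    ring
  calc ((n : ℝ) * m ^ 2 / (n' * (m' : ℝ) ^ 2)) *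
        (((n' : ℝ) * (n : ℝ)^(n'-1)) * (((m' : ℝ) * (m : ℝ)^(m'-1)) * ((m' : ℝ) * (m : ℝ)^(m'-1)))
          * ∑ l, ∑ j, ∑ i, F l j i)
      = (((n : ℝ) * m ^ 2 / (n' * (m' : ℝ) ^ 2)) *
          (((n' : ℝ) * (n : ℝ)^(n'-1)) * (((m' : ℝ) * (m : ℝ)^(m'-1)) * ((m' : ℝ) * (m : ℝ)^(m'-1)))))
          * ∑ l, ∑ j, ∑ i, F l j i := by ring
    _ = _ := by rw [hfact]; ring
end

section
/- Let n, m, m̃, ñ be positive integers, Φ ∈ ℝ^{n×m}, S ∈ ℝ^{m×m}, y ∈ ℝ^n, σ² > 0, and define L_μ(μ) = (1/σ²)(−2 yᵀΦμ + ‖Φμ‖²) + μᵀSμ. Let ĩ, j̃ ∈ {1,…,m}^{m̃} and ℓ̃ ∈ {1,…,n}^{ñ} be mutually independent random index vectors with i.i.d. uniform entries, and let T(μ; ĩ, j̃, ℓ̃) = −(2nm/(σ²ñm̃)) y_{ℓ̃}ᵀ Φ_{ℓ̃,ĩ} μ_{ĩ} + (nm²/(σ²ñm̃²)) μ_{j̃}ᵀ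 Φ_{ℓ̃,j̃}ᵀ Φ_{ℓ̃,ĩ} μ_{ĩ} + (m²/m̃²) μ_{j̃}ᵀ S_{j̃,ĩ} μ_{ĩ} be the quadruply stochastic estimator. Then for every μ ∈ ℝ^m and every coordinate k ∈ {1,…,m}, E[ ∂T/∂μ_k (μ; ĩ, j̃, ℓ̃) ] = ∂L_μ/∂μ_k (μ); i.e., the gradient of the estimator with respect to μ is an unbiased estimator of the gradient of L_μ. -/
/-!
Each coordinate of a uniformly random index vector `g : Fin m̃ → Fin m` is itself uniform, so
averaging a sum `∑ a, f (g a)` over `g` gives `m̃ / m` times the full sum `∑ b, f b`. Applied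
coordinatewise, this turns every subsampled bilinear form `(u ∘ r) ⬝ᵥ A_{r,c} *ᵥ (v ∘ c)` into
a known multiple of `u ⬝ᵥ A *ᵥ v`; for the quadratic term the independence of `ĩ` and `j̃` lets
the average pass through both sides of `(Φ_{ℓ̃,j̃} *ᵥ μ_{j̃}) ⬝ᵥ (Φ_{ℓ̃,ĩ} *ᵥ μ_{ĩ})`. The
prefactors of the estimator cancel exactly these multiples, so its average is `L_μ`, and
differentiation commutes with the finite average.
-/

open Matrix BigOperators

namespace Fintype

variable {α β γ : Type*} [Fintype α] [Fintype β] [Fintype γ]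

theorem expect_eval [DecidableEq α] {M : Type*} [AddCommMonoid M] [Module ℚ≥0 M]
    (f : β → M) (a : α) : 𝔼 g : α → β, f (g a) = 𝔼 b, f b := by
  rcases isEmpty_or_nonempty β with hβ | hβ
  · have : IsEmpty (α → β) := ⟨fun g => isEmptyElim (g a)⟩
    simp [Finset.univ_eq_empty]
  calc 𝔼 g : α → β, f (g a) = 𝔼 p : β × ({j // j ≠ a} → β), f p.1 :=
        expect_equiv (Equiv.funSplitAt a β) _ _ fun _ => rfl
    _ = 𝔼 b, 𝔼 _h : {j // j ≠ a} → β, f b := by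
        rw [← Finset.univ_product_univ, Finset.expect_product]
    _ = 𝔼 b, f b := by simp only [expect_const]

variable {K : Type*} [Semifield K] [CharZero K]

theorem expect_sum_apply [DecidableEq α] (f : β → K) :
    𝔼 g : α → β, ∑ a, f (g a) = (card α / card β : K) * ∑ b, f b := by
  rw [Finset.expect_sum_comm]
  simp only [expect_eval f, Finset.sum_const, Finset.card_univ, expect_eq_sum_div_card,
    nsmul_eq_mul]
  ring

theorem sum_sum_sum_div_card_eq_expect (f : α → β → γ → K) :
    (∑ a, ∑ b, ∑ c, f a b c) / (card α * card β * card γ)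
      = 𝔼 a, 𝔼 b, 𝔼 c, f a b c := by
  simp only [expect_eq_sum_div_card, Finset.sum_div, div_div, mul_comm, mul_assoc]

end Fintype

namespace Matrix

open Fintype

variable {α β γ ι κ : Type*} [Fintype α] [Fintype β] [Fintype γ] [Fintype ι] [Fintype κ]
  {K : Type*} [Semifield K] [CharZero K]

theorem dotProduct_expect (u : ι → K) (f : α → ι → K) :
    u ⬝ᵥ 𝔼 a, f a = 𝔼 a, u ⬝ᵥ f a := by
  simp only [dotProduct, Finset.expect_apply, Finset.mul_expect, Finset.expect_sum_comm]

theorem expect_dotProduct (f : α → ι → K) (u : ι → K) :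
    (𝔼 a, f a) ⬝ᵥ u = 𝔼 a, f a ⬝ᵥ u := by
  simp only [dotProduct, Finset.expect_apply, Finset.expect_mul, Finset.expect_sum_comm]

theorem expect_comp_dotProduct_comp [DecidableEq α] (u w : ι → K) :
    𝔼 r : α → ι, (u ∘ r) ⬝ᵥ (w ∘ r) = (card α / card ι : K) * (u ⬝ᵥ w) :=
  expect_sum_apply fun i => u i * w i

omit [Fintype ι] in
theorem expect_submatrix_mulVec [DecidableEq α] {ι' : Type*} (A : Matrix ι κ K)
    (r : ι' → ι) (v : κ → K) :
    𝔼 c : α → κ, A.submatrix r c *ᵥ (v ∘ c)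
      = (card α / card κ : K) • ((A *ᵥ v) ∘ r) := by
  ext x
  rw [Finset.expect_apply]
  exact expect_sum_apply (α := α) fun j => A (r x) j * v j

theorem expect_dotProduct_submatrix_mulVec [DecidableEq α] [DecidableEq β] (A : Matrix ι κ K)
    (u : ι → K) (v : κ → K) :
    𝔼 c : α → κ, 𝔼 r : β → ι, (u ∘ r) ⬝ᵥ A.submatrix r c *ᵥ (v ∘ c)
      = (card β / card ι * (card α / card κ) : K) * (u ⬝ᵥ A *ᵥ v) := by
  rw [Finset.expect_comm]
  simp_rw [← dotProduct_expect, expect_submatrix_mulVec, dotProduct_smul, smul_eq_mul,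
    ← Finset.mul_expect, expect_comp_dotProduct_comp]
  ring

theorem expect_dotProduct_transpose_mul_submatrix_mulVec [DecidableEq α] [DecidableEq β]
    [DecidableEq γ] (A B : Matrix ι κ K) (u v : κ → K) :
    𝔼 c : α → κ, 𝔼 d : β → κ, 𝔼 r : γ → ι,
        (u ∘ d) ⬝ᵥ ((A.submatrix r d)ᵀ * B.submatrix r c) *ᵥ (v ∘ c)
      = (card γ / card ι * (card β / card κ) * (card α / card κ) : K) *
          ((A *ᵥ u) ⬝ᵥ (B *ᵥ v)) := by
  simp_rw [← mulVec_mulVec, dotProduct_transpose_mulVec,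
    Finset.expect_comm (t := (Finset.univ : Finset (γ → ι)))]
  simp_rw [← dotProduct_expect, expect_submatrix_mulVec, dotProduct_smul, smul_eq_mul,
    ← Finset.mul_expect, ← expect_dotProduct, expect_submatrix_mulVec, smul_dotProduct,
    smul_eq_mul, ← Finset.mul_expect, expect_comp_dotProduct_comp]
  rw [dotProduct_comm]
  ring

end Matrix

theorem HasFDerivAt.fun_expect {ι E : Type*} [Fintype ι] [NormedAddCommGroup E]
    [NormedSpace ℝ E] {f : ι → E → ℝ} {f' : ι → E →L[ℝ] ℝ} {x : E}
    (h : ∀ i, HasFDerivAt (f i) (f' i) x) :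
    HasFDerivAt (fun x => 𝔼 i, f i x) (𝔼 i, f' i) x := by
  simp only [Finset.expect]
  exact (HasFDerivAt.fun_sum fun i _ => h i).const_smul ((Finset.univ.card : ℚ≥0)⁻¹)

theorem ContinuousLinearMap.expect_apply {ι E : Type*} [Fintype ι] [NormedAddCommGroup E]
    [NormedSpace ℝ E] (f : ι → E →L[ℝ] ℝ) (v : E) : (𝔼 i, f i) v = 𝔼 i, f i v := by
  simp only [Finset.expect, _root_.smul_apply, _root_.sum_apply]

section QuadruplyStochastic

variable {n m n' m' : ℕ} (Φ : Matrix (Fin n) (Fin m) ℝ) (S : Matrix (Fin m) (Fin m) ℝ)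
  (y : Fin n → ℝ) (σ2 : ℝ)

noncomputable def negElboMean (ν : Fin m → ℝ) : ℝ :=
  (1 / σ2) * (-2 * (y ⬝ᵥ Φ *ᵥ ν) + ((Φ *ᵥ ν) ⬝ᵥ (Φ *ᵥ ν))) + ν ⬝ᵥ S *ᵥ ν

noncomputable def quadruplyStochasticEstimator (ii jj : Fin m' → Fin m) (ll : Fin n' → Fin n)
    (ν : Fin m → ℝ) : ℝ :=
  -(2 * (n : ℝ) * m / (σ2 * n' * m')) * ((y ∘ ll) ⬝ᵥ (Φ.submatrix ll ii) *ᵥ (ν ∘ ii))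
    + ((n : ℝ) * m ^ 2 / (σ2 * n' * (m' : ℝ) ^ 2)) *
      ((ν ∘ jj) ⬝ᵥ ((Φ.submatrix ll jj)ᵀ * Φ.submatrix ll ii) *ᵥ (ν ∘ ii))
    + ((m : ℝ) ^ 2 / (m' : ℝ) ^ 2) * ((ν ∘ jj) ⬝ᵥ (S.submatrix jj ii) *ᵥ (ν ∘ ii))

theorem differentiable_quadruplyStochasticEstimator (ii jj : Fin m' → Fin m)
    (ll : Fin n' → Fin n) :
    Differentiable ℝ (quadruplyStochasticEstimator Φ S y σ2 ii jj ll) := by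
  unfold quadruplyStochasticEstimator
  simp only [dotProduct, mulVec, Function.comp_def, submatrix_apply]
  fun_prop

theorem expect_quadruplyStochasticEstimator (hn : n ≠ 0) (hm : m ≠ 0) (hn' : n' ≠ 0)
    (hm' : m' ≠ 0) (ν : Fin m → ℝ) :
    𝔼 ii : Fin m' → Fin m, 𝔼 jj : Fin m' → Fin m, 𝔼 ll : Fin n' → Fin n,
      quadruplyStochasticEstimator Φ S y σ2 ii jj ll ν = negElboMean Φ S y σ2 ν := by
  have : NeZero n := ⟨hn⟩
  have : NeZero m := ⟨hm⟩
  simp only [quadruplyStochasticEstimator, Finset.expect_add_distrib, ← Finset.mul_expect,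
    Fintype.expect_const, expect_dotProduct_submatrix_mulVec,
    expect_dotProduct_transpose_mul_submatrix_mulVec, Fintype.card_fin, negElboMean]
  field_simp

end QuadruplyStochastic

theorem quadruply_stochastic_gradient_unbiased_general
    (n m m' n' : ℕ) (hn : 0 < n) (hm' : 0 < m') (hn' : 0 < n')
    (Φ : Matrix (Fin n) (Fin m) ℝ) (S : Matrix (Fin m) (Fin m) ℝ)
    (y : Fin n → ℝ) (σ2 : ℝ)
    (μ : Fin m → ℝ) (k : Fin m) :
    (∑ ii : Fin m' → Fin m, ∑ jj : Fin m' → Fin m, ∑ ll : Fin n' → Fin n,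
        fderiv ℝ
          (fun ν : Fin m → ℝ =>
            -(2 * (n : ℝ) * m / (σ2 * n' * m')) *
                ((y ∘ ll) ⬝ᵥ (Φ.submatrix ll ii) *ᵥ (ν ∘ ii))
              + ((n : ℝ) * m ^ 2 / (σ2 * n' * (m' : ℝ) ^ 2)) *
                ((ν ∘ jj) ⬝ᵥ ((Φ.submatrix ll jj)ᵀ * Φ.submatrix ll ii) *ᵥ (ν ∘ ii))
              + ((m : ℝ) ^ 2 / (m' : ℝ) ^ 2) *
                ((ν ∘ jj) ⬝ᵥ (S.submatrix jj ii) *ᵥ (ν ∘ ii)))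
          μ (Pi.single k 1))
      / ((Fintype.card (Fin m' → Fin m) : ℝ) * (Fintype.card (Fin m' → Fin m)) *
          (Fintype.card (Fin n' → Fin n)))
    = fderiv ℝ
        (fun ν : Fin m → ℝ =>
          (1 / σ2) * (-2 * (y ⬝ᵥ Φ *ᵥ ν) + ((Φ *ᵥ ν) ⬝ᵥ (Φ *ᵥ ν))) + ν ⬝ᵥ S *ᵥ ν)
        μ (Pi.single k 1) := by
  have hT : HasFDerivAt (negElboMean Φ S y σ2)
      (𝔼 ii : Fin m' → Fin m, 𝔼 jj : Fin m' → Fin m, 𝔼 ll : Fin n' → Fin n,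
        fderiv ℝ (quadruplyStochasticEstimator Φ S y σ2 ii jj ll) μ) μ := by
    rw [← funext (expect_quadruplyStochasticEstimator Φ S y σ2 hn.ne' k.pos.ne' hn'.ne' hm'.ne')]
    exact .fun_expect fun ii => .fun_expect fun jj => .fun_expect fun ll =>
      (differentiable_quadruplyStochasticEstimator Φ S y σ2 ii jj ll μ).hasFDerivAt
  rw [Fintype.sum_sum_sum_div_card_eq_expect]
  simp only [← ContinuousLinearMap.expect_apply]
  exact congrArg (· (Pi.single k 1)) hT.fderiv.symm

/-- the gradient of the quadruply stochastic estimator with respect to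
`μ` is an unbiased estimator of the gradient of `L_μ`: for every `μ` and every coordinate
`k`, the expectation over the index vectors `ii, jj : Fin m' → Fin m`,
`ll : Fin n' → Fin n` (i.i.d. uniform entries, mutually independent; expectation formalized
as the uniform average over all index functions) of the partial derivative `∂T/∂μ_k`
(formalized as the Fréchet derivative at `μ` in the direction `Pi.single k 1`) equals
`∂L_μ/∂μ_k (μ)`.  Here `m'` plays the role of `m̃` and `n'` of `ñ`. -/
theorem quadruply_stochastic_gradient_unbiased
    (n m m' n' : ℕ) (hn : 0 < n) (hm : 0 < m) (hm' : 0 < m') (hn' : 0 < n')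
    (Φ : Matrix (Fin n) (Fin m) ℝ) (S : Matrix (Fin m) (Fin m) ℝ)
    (y : Fin n → ℝ) (σ2 : ℝ) (hσ : 0 < σ2)
    (μ : Fin m → ℝ) (k : Fin m) :
    (∑ ii : Fin m' → Fin m, ∑ jj : Fin m' → Fin m, ∑ ll : Fin n' → Fin n,
        fderiv ℝ
          (fun ν : Fin m → ℝ =>
            -(2 * (n : ℝ) * m / (σ2 * n' * m')) *
                ((y ∘ ll) ⬝ᵥ (Φ.submatrix ll ii) *ᵥ (ν ∘ ii))
              + ((n : ℝ) * m ^ 2 / (σ2 * n' * (m' : ℝ) ^ 2)) *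
                ((ν ∘ jj) ⬝ᵥ ((Φ.submatrix ll jj)ᵀ * Φ.submatrix ll ii) *ᵥ (ν ∘ ii))
              + ((m : ℝ) ^ 2 / (m' : ℝ) ^ 2) *
                ((ν ∘ jj) ⬝ᵥ (S.submatrix jj ii) *ᵥ (ν ∘ ii)))
          μ (Pi.single k 1))
      / ((Fintype.card (Fin m' → Fin m) : ℝ) * (Fintype.card (Fin m' → Fin m)) *
          (Fintype.card (Fin n' → Fin n)))
    = fderiv ℝ
        (fun ν : Fin m → ℝ =>
          (1 / σ2) * (-2 * (y ⬝ᵥ Φ *ᵥ ν) + ((Φ *ᵥ ν) ⬝ᵥ (Φ *ᵥ ν))) + ν ⬝ᵥ S *ᵥ ν)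
        μ (Pi.single k 1) :=
  quadruply_stochastic_gradient_unbiased_general n m m' n' hn hm' hn' Φ S y σ2 μ k
end
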